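/- With V^{m,n} = V^{⊗m} ⊗ (V*)^{⊗n} for dim V = N, the kernel of 𝒜_{m,n} = Σ_{a,b'} τ_{ab'} equals the traceless subspace V₀^{m,n} = ∩_{a,b'} ker(tr_{ab'}), the image of 𝒜_{m,n} equals the span V₁^{m,n} of the images of all insertion maps tr⁺_{ab'}, and V^{m,n} = V₀^{m,n} ⊕ V₁^{m,n}. -/

import Mathlib

open scoped BigOperators

noncomputable section

/-- Mixed tensors of valence (m,n) on an N-dimensional space, given by components. -/
abbrev Tens (N m n : ℕ) := (Fin m → Fin N) → (Fin n → Fin N) → ℂ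

namespace Mixed

variable (N : ℕ)

/-- The contraction (trace) map `tr_{ab'}` contracting the a-th contravariant slot
with the b-th covariant slot. -/
def trMap (m n : ℕ) (a : Fin (m+1)) (b : Fin (n+1)) :
    Tens N (m+1) (n+1) →ₗ[ℂ] Tens N m n where
  toFun t := fun i j => ∑ k : Fin N, t (a.insertNth k i) (b.insertNth k j)
  map_add' t s := by funext i j; simp [Finset.sum_add_distrib]
  map_smul' c t := by funext i j; simp [Finset.mul_sum]

/-- The insertion map `tr⁺_{ab'}` inserting the canonical invariant `∑ᵢ eᵢ ⊗ eⁱ`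
at positions a and b. -/
def insMap (m n : ℕ) (a : Fin (m+1)) (b : Fin (n+1)) :
    Tens N m n →ₗ[ℂ] Tens N (m+1) (n+1) where
  toFun t := fun i j =>
    if i a = j b then t (fun x => i (a.succAbove x)) (fun y => j (b.succAbove y)) else 0
  map_add' t s := by funext i j; by_cases h : i a = j b <;> simp [h]
  map_smul' c t := by funext i j; by_cases h : i a = j b <;> simp [h]

/-- `τ_{ab'} = tr⁺_{ab'} ∘ tr_{ab'}`. -/
def tau (m n : ℕ) (a : Fin (m+1)) (b : Fin (n+1)) :
    Module.End ℂ (Tens N (m+1) (n+1)) :=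
  (insMap N m n a b).comp (trMap N m n a b)

/-- `𝒜_{m,n} = ∑_{a,b'} τ_{ab'}`. -/
def AOp (m n : ℕ) : Module.End ℂ (Tens N (m+1) (n+1)) :=
  ∑ a : Fin (m+1), ∑ b : Fin (n+1), tau N m n a b

/-- The traceless subspace: common kernel of all contractions. -/
def traceless (m n : ℕ) : Submodule ℂ (Tens N (m+1) (n+1)) :=
  ⨅ a : Fin (m+1), ⨅ b : Fin (n+1), LinearMap.ker (trMap N m n a b)

/-- The span of the images of all insertion maps. -/
def traceSpan (m n : ℕ) : Submodule ℂ (Tens N (m+1) (n+1)) :=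
  ⨆ a : Fin (m+1), ⨆ b : Fin (n+1), LinearMap.range (insMap N m n a b)

end Mixed

/-!
Identify mixed tensors with a Euclidean space by declaring the component basis orthonormal.
Then each insertion `tr⁺_{ab'}` is the adjoint of the contraction `tr_{ab'}`, so `𝒜_{m,n}` is the
Gram operator `∑ Tᵢ† Tᵢ` of the finite family of contractions. Since `⟪𝒜 t, t⟫ = ∑ ‖Tᵢ t‖²`, its
kernel is `⋂ ker Tᵢ`; being self-adjoint, its range is `(⋂ ker Tᵢ)ᗮ = ∑ range Tᵢ†`, which is
an orthogonal complement of `⋂ ker Tᵢ`.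
-/

namespace LinearMap

variable {𝕜 E F ι : Type*} [RCLike 𝕜] [NormedAddCommGroup E] [InnerProductSpace 𝕜 E]
  [FiniteDimensional 𝕜 E] [NormedAddCommGroup F] [InnerProductSpace 𝕜 F] [FiniteDimensional 𝕜 F]
  [Fintype ι] (T : ι → E →ₗ[𝕜] F)

lemma ker_sum_adjoint_comp_self :
    ker (∑ i, (T i).adjoint ∘ₗ T i) = ⨅ i, ker (T i) := by
  ext x
  simp only [mem_ker, Submodule.mem_iInf]
  refine ⟨fun hx i => ?_, fun hx => by simp [hx]⟩
  have hsum : ∑ i, ‖T i x‖ ^ 2 = 0 := by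
    have h : (inner 𝕜 x ((∑ i, (T i).adjoint ∘ₗ T i) x) : 𝕜) = ∑ i, (‖T i x‖ ^ 2 : ℝ) := by
      simp [inner_sum, adjoint_inner_right, inner_self_eq_norm_sq_to_K]
    rw [hx, inner_zero_right] at h
    exact_mod_cast h.symm
  simpa using (Finset.sum_eq_zero_iff_of_nonneg fun i _ => sq_nonneg ‖T i x‖).1 hsum i
    (Finset.mem_univ i)

lemma orthogonal_iInf_ker : (⨅ i, ker (T i))ᗮ = ⨆ i, range (T i).adjoint := by
  have hker : ∀ i, ker (T i) = (range (T i).adjoint)ᗮ := fun i => by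
    rw [orthogonal_range, adjoint_adjoint]
  simp only [hker, Submodule.iInf_orthogonal, Submodule.orthogonal_orthogonal]

lemma range_sum_adjoint_comp_self :
    range (∑ i, (T i).adjoint ∘ₗ T i) = ⨆ i, range (T i).adjoint := by
  have hsymm : (∑ i, (T i).adjoint ∘ₗ T i).adjoint = ∑ i, (T i).adjoint ∘ₗ T i := by
    simp [map_sum, adjoint_comp, adjoint_adjoint]
  rw [← hsymm, ← orthogonal_ker, ker_sum_adjoint_comp_self, orthogonal_iInf_ker]

lemma isCompl_iInf_ker_iSup_range_adjoint :
    IsCompl (⨅ i, ker (T i)) (⨆ i, range (T i).adjoint) :=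
  orthogonal_iInf_ker T ▸ Submodule.isCompl_orthogonal _

end LinearMap

namespace LinearEquiv

variable {R M₁ M₂ N₁ N₂ : Type*} [CommSemiring R] [AddCommMonoid M₁] [AddCommMonoid M₂]
  [AddCommMonoid N₁] [AddCommMonoid N₂] [Module R M₁] [Module R M₂] [Module R N₁] [Module R N₂]
  (e₁ : M₁ ≃ₗ[R] M₂) (e₂ : N₁ ≃ₗ[R] N₂) (f : M₁ →ₗ[R] N₁)

lemma ker_arrowCongr :
    LinearMap.ker (arrowCongr e₁ e₂ f) = (LinearMap.ker f).map e₁.toLinearMap := by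
  ext x
  simp [Submodule.map_equiv_eq_comap_symm]

lemma range_arrowCongr :
    LinearMap.range (arrowCongr e₁ e₂ f) = (LinearMap.range f).map e₂.toLinearMap := by
  change LinearMap.range ((e₂.toLinearMap ∘ₗ f) ∘ₗ e₁.symm.toLinearMap) = _
  rw [LinearMap.range_comp_of_range_eq_top _ e₁.symm.range, LinearMap.range_comp]

end LinearEquiv

lemma Fin.sum_fun_insertNth {α M : Type*} [Fintype α] [AddCommMonoid M] {q : ℕ}
    (c : Fin (q + 1)) (f : (Fin (q + 1) → α) → M) :
    ∑ i, f i = ∑ k : α, ∑ i : Fin q → α, f (c.insertNth k i) := by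
  rw [← (Fin.insertNthEquiv (fun _ => α) c).sum_comp, Fintype.sum_prod_type]
  rfl

namespace Mixed

open LinearMap

variable {N : ℕ}

variable (N) in
def toEuclidean (m n : ℕ) :
    Tens N m n ≃ₗ[ℂ] EuclideanSpace ℂ ((Fin m → Fin N) × (Fin n → Fin N)) :=
  (LinearEquiv.curry ℂ ℂ _ _).symm ≪≫ₗ (WithLp.linearEquiv 2 ℂ _).symm

lemma inner_toEuclidean {m n : ℕ} (s t : Tens N m n) :
    inner ℂ (toEuclidean N m n s) (toEuclidean N m n t) =
      ∑ i, ∑ j, starRingEnd ℂ (s i j) * t i j := by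
  simp only [PiLp.inner_apply, RCLike.inner_apply, Fintype.sum_prod_type]
  exact Finset.sum_congr rfl fun i _ => Finset.sum_congr rfl fun j _ => mul_comm _ _

lemma insMap_insertNth {m n : ℕ} (a : Fin (m + 1)) (b : Fin (n + 1)) (u : Tens N m n)
    (k l : Fin N) (i : Fin m → Fin N) (j : Fin n → Fin N) :
    insMap N m n a b u (a.insertNth k i) (b.insertNth l j) = if k = l then u i j else 0 := by
  simp [insMap]

lemma inner_insMap_left {m n : ℕ} (a : Fin (m + 1)) (b : Fin (n + 1)) (u : Tens N m n)
    (t : Tens N (m + 1) (n + 1)) :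
    inner ℂ (toEuclidean N _ _ (insMap N m n a b u)) (toEuclidean N _ _ t) =
      inner ℂ (toEuclidean N _ _ u) (toEuclidean N _ _ (trMap N m n a b t)) := by
  simp only [inner_toEuclidean, Fin.sum_fun_insertNth a,
    Fin.sum_fun_insertNth b (f := fun j => _ * _), insMap_insertNth, apply_ite (starRingEnd ℂ),
    map_zero, ite_mul, zero_mul,
    Finset.sum_ite_irrel, Finset.sum_const_zero, Finset.sum_ite_eq, Finset.mem_univ, if_true]
  simp only [trMap, coe_mk, AddHom.coe_mk, Finset.mul_sum]
  rw [Finset.sum_comm]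
  exact Finset.sum_congr rfl fun i _ => Finset.sum_comm

variable (N) in
def trEuclidean (m n : ℕ) (a : Fin (m + 1)) (b : Fin (n + 1)) :
    EuclideanSpace ℂ ((Fin (m + 1) → Fin N) × (Fin (n + 1) → Fin N)) →ₗ[ℂ]
      EuclideanSpace ℂ ((Fin m → Fin N) × (Fin n → Fin N)) :=
  (toEuclidean N _ _).arrowCongr (toEuclidean N _ _) (trMap N m n a b)

lemma adjoint_trEuclidean {m n : ℕ} (a : Fin (m + 1)) (b : Fin (n + 1)) :
    (trEuclidean N m n a b).adjoint =
      (toEuclidean N _ _).arrowCongr (toEuclidean N _ _) (insMap N m n a b) := by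
  refine ((eq_adjoint_iff _ _).2 fun x y => ?_).symm
  obtain ⟨u, rfl⟩ := (toEuclidean N m n).surjective x
  obtain ⟨t, rfl⟩ := (toEuclidean N (m + 1) (n + 1)).surjective y
  simpa [trEuclidean] using inner_insMap_left a b u t

lemma conj_AOp (m n : ℕ) :
    (toEuclidean N (m + 1) (n + 1)).conj (AOp N m n) =
      ∑ p : Fin (m + 1) × Fin (n + 1),
        (trEuclidean N m n p.1 p.2).adjoint ∘ₗ trEuclidean N m n p.1 p.2 := by
  simp only [AOp, tau, map_sum, LinearEquiv.conj, Fintype.sum_prod_type]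
  refine Finset.sum_congr rfl fun a _ => Finset.sum_congr rfl fun b _ => ?_
  rw [LinearEquiv.arrowCongr_comp _ (toEuclidean N m n), adjoint_trEuclidean, trEuclidean]

lemma map_traceless (m n : ℕ) :
    (traceless N m n).map (toEuclidean N (m + 1) (n + 1)).toLinearMap =
      ⨅ p : Fin (m + 1) × Fin (n + 1), ker (trEuclidean N m n p.1 p.2) := by
  simp only [traceless, trEuclidean, LinearEquiv.ker_arrowCongr, iInf_prod,
    Submodule.map_iInf _ (toEuclidean N _ _).injective]

lemma map_traceSpan (m n : ℕ) :
    (traceSpan N m n).map (toEuclidean N (m + 1) (n + 1)).toLinearMap =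
      ⨆ p : Fin (m + 1) × Fin (n + 1), range (trEuclidean N m n p.1 p.2).adjoint := by
  simp only [traceSpan, adjoint_trEuclidean, LinearEquiv.range_arrowCongr, iSup_prod,
    Submodule.map_iSup]

end Mixed

/-- ker 𝒜_{m,n} equals the traceless subspace V₀^{m,n}, the image of
𝒜_{m,n} equals the span V₁^{m,n} of the images of the insertion maps, and
V^{m,n} = V₀^{m,n} ⊕ V₁^{m,n}. -/
theorem ker_im_Amn (N m n : ℕ) :
    LinearMap.ker (Mixed.AOp N m n) = Mixed.traceless N m n ∧
    LinearMap.range (Mixed.AOp N m n) = Mixed.traceSpan N m n ∧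
    IsCompl (Mixed.traceless N m n) (Mixed.traceSpan N m n) := by
  set e := Mixed.toEuclidean N (m + 1) (n + 1)
  have map_inj := Submodule.map_injective_of_injective e.injective
  refine ⟨map_inj ?_, map_inj ?_, ?_⟩
  · rw [← LinearEquiv.ker_arrowCongr e e, ← LinearEquiv.conj, Mixed.conj_AOp,
      LinearMap.ker_sum_adjoint_comp_self, Mixed.map_traceless]
  · rw [← LinearEquiv.range_arrowCongr e e, ← LinearEquiv.conj, Mixed.conj_AOp,
      LinearMap.range_sum_adjoint_comp_self, Mixed.map_traceSpan]
  · rw [(Submodule.orderIsoMapComap e).isCompl_iff, Submodule.orderIsoMapComap_apply,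
      Submodule.orderIsoMapComap_apply, Mixed.map_traceless, Mixed.map_traceSpan]
    exact LinearMap.isCompl_iInf_ker_iSup_range_adjoint _
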